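/- Let M be a free abelian group with basis e₁,…,e_n (n ≥ 1) and let v = e₁ + … + e_n. If M = M₁ ⊕ M₂ is a direct sum decomposition with both M₁ and M₂ nonzero, then at least one of the elements e₁,…,e_n, v belongs to neither M₁ nor M₂. -/

import Mathlib

open Set

/-! If every basis vector lies in `p ∪ q` for complementary submodules `p`, `q`, and the sum of
all basis vectors lies in `p`, then the basis vectors outside `p` lie in `q` and sum to an element
of `p ∩ q = 0`; by linear independence there are none, so `p = ⊤` and `q = ⊥`. -/

theorem LinearIndependent.finset_sum_eq_zero_iff {ι R M : Type*} [Ring R] [Nontrivial R]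
    [AddCommGroup M] [Module R M] {e : ι → M} (he : LinearIndependent R e) (s : Finset ι) :
    ∑ i ∈ s, e i = 0 ↔ s = ∅ := by
  refine ⟨fun hzero => Finset.eq_empty_of_forall_notMem fun j hj => ?_, fun hs => hs ▸ rfl⟩
  exact one_ne_zero (linearIndependent_iff'.mp he s (fun _ => (1 : R)) (by simpa using hzero) j hj)

namespace Submodule

variable {ι R M : Type*} [Fintype ι] [Ring R] [Nontrivial R] [AddCommGroup M] [Module R M]
  {p q : Submodule R M}

theorem eq_bot_of_isCompl_of_basis_sum_mem (hpq : IsCompl p q) (e : Module.Basis ι R M)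
    (hmem : ∀ i, e i ∈ p ∨ e i ∈ q) (hsum : ∑ i, e i ∈ p) : q = ⊥ := by
  classical
  let T := Finset.univ.filter fun i => e i ∉ p
  have hT_q : ∑ i ∈ T, e i ∈ q :=
    q.sum_mem fun i hi => (hmem i).resolve_left (Finset.mem_filter.mp hi).2
  have hT_p : ∑ i ∈ T, e i ∈ p := by
    have hS_p : ∑ i ∈ Finset.univ.filter (fun i => e i ∈ p), e i ∈ p :=
      p.sum_mem fun i hi => (Finset.mem_filter.mp hi).2
    rw [← Finset.sum_filter_add_sum_filter_not Finset.univ (fun i => e i ∈ p)] at hsum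
    exact (p.add_mem_iff_right hS_p).mp hsum
  have hT_empty : T = ∅ := by
    rw [← e.linearIndependent.finset_sum_eq_zero_iff, ← mem_bot R, ← hpq.inf_eq_bot]
    exact ⟨hT_p, hT_q⟩
  have hp_top : p = ⊤ := by
    rw [eq_top_iff, ← e.span_eq, span_le]
    rintro _ ⟨i, rfl⟩
    by_contra hi
    exact (Finset.eq_empty_iff_forall_notMem.mp hT_empty) i (by simpa [T] using hi)
  exact eq_bot_of_isCompl_top (hp_top ▸ hpq.symm)

end Submodule

theorem basis_and_sum_not_in_proper_summands_general
    {M : Type*} [AddCommGroup M] {n : ℕ}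
    (e : Module.Basis (Fin n) ℤ M) (v : M) (hv : v = ∑ i, e i)
    (M₁ M₂ : Submodule ℤ M) (hcompl : IsCompl M₁ M₂)
    (h₁ : M₁ ≠ ⊥) (h₂ : M₂ ≠ ⊥) :
    ∃ x ∈ insert v (range e), x ∉ M₁ ∧ x ∉ M₂ := by
  by_contra! hcon
  have hmem : ∀ x ∈ insert v (range e), x ∈ M₁ ∨ x ∈ M₂ :=
    fun x hx => or_iff_not_imp_left.mpr (hcon x hx)
  have hbasis : ∀ i, e i ∈ M₁ ∨ e i ∈ M₂ :=
    fun i => hmem _ (mem_insert_of_mem _ (mem_range_self i))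
  rcases hv ▸ hmem v (mem_insert _ _) with hv₁ | hv₂
  · exact h₂ (Submodule.eq_bot_of_isCompl_of_basis_sum_mem hcompl e hbasis hv₁)
  · exact h₁ (Submodule.eq_bot_of_isCompl_of_basis_sum_mem hcompl.symm e
      (fun i => (hbasis i).symm) hv₂)

/-- Let `M` be a free abelian group with basis `e₁, …, eₙ` (`n ≥ 1`) and let
`v = e₁ + ⋯ + eₙ`.  If `M = M₁ ⊕ M₂` with both `M₁` and `M₂` nonzero, then at least one
of the elements `e₁, …, eₙ, v` lies in neither `M₁` nor `M₂`. -/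
theorem basis_and_sum_not_in_proper_summands
    {M : Type*} [AddCommGroup M] {n : ℕ} (hn : 1 ≤ n)
    (e : Module.Basis (Fin n) ℤ M) (v : M) (hv : v = ∑ i, e i)
    (M₁ M₂ : Submodule ℤ M) (hcompl : IsCompl M₁ M₂)
    (h₁ : M₁ ≠ ⊥) (h₂ : M₂ ≠ ⊥) :
    ∃ x ∈ insert v (range e), x ∉ M₁ ∧ x ∉ M₂ :=
  basis_and_sum_not_in_proper_summands_general e v hv M₁ M₂ hcompl h₁ h₂
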